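/- Let A ∈ Sⁿ and let C(A) = conv{Π A Πᵀ : Π ∈ Sym(n)} be the convex hull of the orbit of A under permutation conjugation. Then C(A) = ⋂_{P ∈ Sⁿ} {B ∈ Sⁿ : Θ_P(B) ≤ Θ_P(A)}. -/

import Mathlib

/-!
Each `Θ_P` is a maximum of linear functionals, hence convex, and it does not increase under
permutation conjugation, so every sublevel set `{B | Θ_P(B) ≤ Θ_P(A)}` is a convex set containing
the orbit of `A`. Conversely, a symmetric `B` outside the hull of the (finite) orbit is strictly
separated from it by a functional `tr(Q ·)`; on symmetric matrices `tr((Q + Qᵀ) ·) = 2 tr(Q ·)`,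
so with the symmetric `P = Q + Qᵀ` we get `Θ_P(A) < tr(P B) ≤ Θ_P(B)`.
-/

open Matrix

noncomputable def permConj {n : ℕ} (σ : Equiv.Perm (Fin n))
    (A : Matrix (Fin n) (Fin n) ℝ) : Matrix (Fin n) (Fin n) ℝ :=
  (σ.permMatrix ℝ) * A * (σ.permMatrix ℝ)ᵀ

/-- The elementary convex graph invariant `Θ_P(A) = max_Π tr(P Π A Πᵀ)`. -/
noncomputable def theta {n : ℕ} (P A : Matrix (Fin n) (Fin n) ℝ) : ℝ :=
  (Finset.univ : Finset (Equiv.Perm (Fin n))).sup' Finset.univ_nonempty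
    (fun σ => (P * permConj σ A).trace)

namespace Matrix

theorem convex_setOf_isSymm {m : Type*} : Convex ℝ {B : Matrix m m ℝ | B.IsSymm} :=
  fun _ hx _ hy a b _ _ _ => (hx.smul a).add (hy.smul b)

variable {m : Type*} [Fintype m]

theorem trace_transpose_mul_of_isSymm {R : Type*} [CommSemiring R] (Q : Matrix m m R)
    {M : Matrix m m R} (hM : M.IsSymm) : (Qᵀ * M).trace = (Q * M).trace := by
  rw [← hM.eq, ← transpose_mul, trace_transpose, trace_mul_comm, hM.eq]

variable [DecidableEq m]

theorem exists_trace_mul_eq {R : Type*} [CommSemiring R] (f : Matrix m m R →ₗ[R] R) :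
    ∃ Q : Matrix m m R, ∀ M, (Q * M).trace = f M := by
  refine ⟨of fun i j => f (single j i 1), fun M => ?_⟩
  conv_rhs => rw [matrix_eq_sum_single M]
  simp only [trace, diag_apply, mul_apply, of_apply, map_sum]
  rw [Finset.sum_comm]
  refine Finset.sum_congr rfl fun i _ => Finset.sum_congr rfl fun j _ => ?_
  have hsingle : single i j (M i j) = M i j • single i j (1 : R) := by
    rw [smul_single, smul_eq_mul, mul_one]
  rw [hsingle, map_smul, smul_eq_mul, mul_comm]

open scoped Matrix.Norms.Elementwise in
theorem exists_trace_mul_lt_of_notMem {s : Set (Matrix m m ℝ)} (hs : Convex ℝ s)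
    (hsc : IsClosed s) {B : Matrix m m ℝ} (hB : B ∉ s) :
    ∃ Q : Matrix m m ℝ, ∀ x ∈ s, (Q * x).trace < (Q * B).trace := by
  have : LocallyConvexSpace ℝ (Matrix m m ℝ) := NormedSpace.toLocallyConvexSpace
  obtain ⟨f, u, hfs, huB⟩ := geometric_hahn_banach_closed_point hs hsc hB
  obtain ⟨Q, hQ⟩ := exists_trace_mul_eq (f : Matrix m m ℝ →ₗ[ℝ] ℝ)
  exact ⟨Q, fun x hx => by simpa [hQ] using (hfs x hx).trans huB⟩

theorem exists_isSymm_trace_mul_lt_of_notMem_convexHull {S : Set (Matrix m m ℝ)}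
    (hS : S.Finite) (hS_symm : ∀ x ∈ S, x.IsSymm) {B : Matrix m m ℝ} (hB : B.IsSymm)
    (hBS : B ∉ convexHull ℝ S) :
    ∃ P : Matrix m m ℝ, P.IsSymm ∧ ∀ x ∈ S, (P * x).trace < (P * B).trace := by
  obtain ⟨Q, hQ⟩ :=
    exists_trace_mul_lt_of_notMem (convex_convexHull ℝ S) (hS.isClosed_convexHull ℝ) hBS
  refine ⟨Q + Qᵀ, isSymm_add_transpose_self Q, fun x hx => ?_⟩
  have hxQ := hQ x (subset_convexHull ℝ S hx)
  simp only [add_mul, trace_add, trace_transpose_mul_of_isSymm Q hB,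
    trace_transpose_mul_of_isSymm Q (hS_symm x hx)]
  linarith

end Matrix

section

variable {n : ℕ}

theorem permConj_eq_submatrix (σ : Equiv.Perm (Fin n)) (A : Matrix (Fin n) (Fin n) ℝ) :
    permConj σ A = A.submatrix σ σ := by
  unfold permConj Equiv.Perm.permMatrix
  rw [PEquiv.toMatrix_toPEquiv_mul, ← PEquiv.toMatrix_symm, ← Equiv.toPEquiv_symm,
    PEquiv.mul_toMatrix_toPEquiv, submatrix_submatrix]
  simp

theorem permConj_permConj (σ τ : Equiv.Perm (Fin n)) (A : Matrix (Fin n) (Fin n) ℝ) :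
    permConj τ (permConj σ A) = permConj (σ * τ) A := by
  simp only [permConj_eq_submatrix, submatrix_submatrix]
  rfl

@[simp]
theorem permConj_one (A : Matrix (Fin n) (Fin n) ℝ) : permConj 1 A = A := by
  simp [permConj_eq_submatrix]

theorem Matrix.IsSymm.permConj {A : Matrix (Fin n) (Fin n) ℝ} (hA : A.IsSymm)
    (σ : Equiv.Perm (Fin n)) : (permConj σ A).IsSymm := by
  rw [permConj_eq_submatrix]
  exact hA.submatrix σ

theorem isLinearMap_trace_mul_permConj (P : Matrix (Fin n) (Fin n) ℝ) (σ : Equiv.Perm (Fin n)) :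
    IsLinearMap ℝ fun B => (P * permConj σ B).trace where
  map_add B C := by simp [permConj, Matrix.mul_add, Matrix.add_mul]
  map_smul c B := by simp [permConj]

theorem trace_mul_permConj_le_theta (P B : Matrix (Fin n) (Fin n) ℝ) (σ : Equiv.Perm (Fin n)) :
    (P * permConj σ B).trace ≤ theta P B :=
  Finset.le_sup' (fun σ => (P * permConj σ B).trace) (Finset.mem_univ σ)

theorem trace_mul_le_theta (P B : Matrix (Fin n) (Fin n) ℝ) : (P * B).trace ≤ theta P B := by
  simpa using trace_mul_permConj_le_theta P B 1

theorem theta_lt_iff {P A : Matrix (Fin n) (Fin n) ℝ} {c : ℝ} :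
    theta P A < c ↔ ∀ σ, (P * permConj σ A).trace < c := by
  simp [theta, Finset.sup'_lt_iff]

theorem theta_permConj_le (P A : Matrix (Fin n) (Fin n) ℝ) (σ : Equiv.Perm (Fin n)) :
    theta P (permConj σ A) ≤ theta P A :=
  Finset.sup'_le _ _ fun τ _ => by
    rw [permConj_permConj]
    exact trace_mul_permConj_le_theta P A (σ * τ)

theorem convex_setOf_theta_le (P : Matrix (Fin n) (Fin n) ℝ) (c : ℝ) :
    Convex ℝ {B | theta P B ≤ c} := by
  have : {B | theta P B ≤ c} = ⋂ σ, {B | (P * permConj σ B).trace ≤ c} := by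
    ext B
    simp [theta, Finset.sup'_le_iff]
  rw [this]
  exact convex_iInter fun σ => convex_halfSpace_le (isLinearMap_trace_mul_permConj P σ) c

end

theorem stmt3 (n : ℕ) (A : Matrix (Fin n) (Fin n) ℝ) (hA : A.IsSymm) :
    convexHull ℝ {B : Matrix (Fin n) (Fin n) ℝ | ∃ σ : Equiv.Perm (Fin n), B = permConj σ A} =
      ⋂ P ∈ {P : Matrix (Fin n) (Fin n) ℝ | P.IsSymm},
        {B : Matrix (Fin n) (Fin n) ℝ | B.IsSymm ∧ theta P B ≤ theta P A} := by
  refine subset_antisymm (Set.subset_iInter₂ fun P _ => convexHull_min ?_ ?_) fun B hB => ?_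
  · rintro _ ⟨σ, rfl⟩
    exact ⟨hA.permConj σ, theta_permConj_le P A σ⟩
  · exact convex_setOf_isSymm.inter (convex_setOf_theta_le P _)
  have hB_symm : B.IsSymm := (Set.mem_iInter₂.mp hB 0 isSymm_zero).1
  by_contra hBS
  have hfin : {B | ∃ σ : Equiv.Perm (Fin n), B = permConj σ A}.Finite :=
    (Set.finite_range fun σ => permConj σ A).subset fun _ ⟨σ, hσ⟩ => ⟨σ, hσ.symm⟩
  obtain ⟨P, hP, hsep⟩ := exists_isSymm_trace_mul_lt_of_notMem_convexHull hfin
    (fun _ ⟨σ, hσ⟩ => hσ ▸ hA.permConj σ) hB_symm hBS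
  have hθA : theta P A < (P * B).trace := theta_lt_iff.mpr fun σ => hsep _ ⟨σ, rfl⟩
  have hθB : theta P B ≤ theta P A := (Set.mem_iInter₂.mp hB P hP).2
  linarith [trace_mul_le_theta P B]
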